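/- arXiv:1507.05972 — 2 statements merged into one kernel-verified Lean document; each statement's English description precedes it below -/
import Mathlib

section
/- Let k ≥ 2 and let C₀ = { (λ_F, λ_B; δ_1, …, δ_k) ∈ ℝ_{>0}^{2+k} : λ_F > δ_i for all i, and λ_F·λ_B − (1/2)·∑ δ_i² > 0 }. If v ∈ C₀ and defect(v) = δ_1 + δ_2 − λ_F > 0, then cremona(v) ∈ C₀. -/
/-!
The move reflects `δ₁, δ₂` through `λ_F` (swapping them), which maps `(0, λ_F)` onto itself and
changes `∑ δᵢ²` by exactly `-2 λ_F · defect(v)`; lowering `λ_B` by `defect(v)` compensates this,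
so the volume is invariant. Positivity of the new `λ_B` then follows from positivity of the volume.
-/

open Finset

def cremonaδ (lamF : ℝ) (δ : ℕ → ℝ) (i : ℕ) : ℝ :=
  if i = 1 then lamF - δ 2 else if i = 2 then lamF - δ 1 else δ i

section

variable {lamF : ℝ} {δ : ℕ → ℝ}

theorem cremonaδ_one : cremonaδ lamF δ 1 = lamF - δ 2 := rfl

theorem cremonaδ_two : cremonaδ lamF δ 2 = lamF - δ 1 := rfl

theorem cremonaδ_of_ne {i : ℕ} (h1 : i ≠ 1) (h2 : i ≠ 2) : cremonaδ lamF δ i = δ i := by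
  simp [cremonaδ, h1, h2]

theorem cremonaδ_mem_Ioo {s : Finset ℕ} (h1 : 1 ∈ s) (h2 : 2 ∈ s)
    (h : ∀ i ∈ s, δ i ∈ Set.Ioo 0 lamF) : ∀ i ∈ s, cremonaδ lamF δ i ∈ Set.Ioo 0 lamF := by
  have reflect : ∀ j ∈ s, lamF - δ j ∈ Set.Ioo 0 lamF := fun j hj => by
    obtain ⟨hpos, hlt⟩ := h j hj
    constructor <;> linarith
  intro i hi
  by_cases hi1 : i = 1
  · exact hi1 ▸ reflect 2 h2
  by_cases hi2 : i = 2
  · exact hi2 ▸ reflect 1 h1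
  · exact cremonaδ_of_ne hi1 hi2 ▸ h i hi

theorem sum_sq_cremonaδ {s : Finset ℕ} (h1 : 1 ∈ s) (h2 : 2 ∈ s) :
    ∑ i ∈ s, cremonaδ lamF δ i ^ 2 = ∑ i ∈ s, δ i ^ 2 - 2 * lamF * (δ 1 + δ 2 - lamF) := by
  have hdiff : ∑ i ∈ s, (cremonaδ lamF δ i ^ 2 - δ i ^ 2)
      = (cremonaδ lamF δ 1 ^ 2 - δ 1 ^ 2) + (cremonaδ lamF δ 2 ^ 2 - δ 2 ^ 2) :=
    sum_eq_add_of_mem 1 2 h1 h2 (by norm_num) fun i _ hi => by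
      rw [cremonaδ_of_ne hi.1 hi.2, sub_self]
  rw [sum_sub_distrib, cremonaδ_one, cremonaδ_two] at hdiff
  linarith

theorem volume_cremona {s : Finset ℕ} (h1 : 1 ∈ s) (h2 : 2 ∈ s) (lamB : ℝ) :
    lamF * (lamB - (δ 1 + δ 2 - lamF)) - 1 / 2 * ∑ i ∈ s, cremonaδ lamF δ i ^ 2
      = lamF * lamB - 1 / 2 * ∑ i ∈ s, δ i ^ 2 := by
  rw [sum_sq_cremonaδ h1 h2]
  ring

end

theorem cremona_preserves_cone_general (k : ℕ) (hk : 2 ≤ k) (lamF lamB : ℝ) (δ : ℕ → ℝ)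
    (hF : 0 < lamF)
    (hδ : ∀ i ∈ Finset.Icc 1 k, 0 < δ i)
    (hFδ : ∀ i ∈ Finset.Icc 1 k, δ i < lamF)
    (hvol : 0 < lamF * lamB - (1/2) * ∑ i ∈ Finset.Icc 1 k, (δ i)^2) :
    let δ' : ℕ → ℝ := fun i => if i = 1 then lamF - δ 2 else if i = 2 then lamF - δ 1 else δ i
    let lamB' : ℝ := lamB - (δ 1 + δ 2 - lamF)
    0 < lamF ∧ 0 < lamB' ∧ (∀ i ∈ Finset.Icc 1 k, 0 < δ' i) ∧
      (∀ i ∈ Finset.Icc 1 k, δ' i < lamF) ∧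
      0 < lamF * lamB' - (1/2) * ∑ i ∈ Finset.Icc 1 k, (δ' i)^2 := by
  intro δ' lamB'
  have h1 : 1 ∈ Icc 1 k := mem_Icc.2 ⟨le_rfl, by omega⟩
  have h2 : 2 ∈ Icc 1 k := mem_Icc.2 ⟨by norm_num, hk⟩
  have hδ' : ∀ i ∈ Icc 1 k, δ' i ∈ Set.Ioo 0 lamF :=
    cremonaδ_mem_Ioo h1 h2 fun i hi => ⟨hδ i hi, hFδ i hi⟩
  have hvol' : 0 < lamF * lamB' - 1 / 2 * ∑ i ∈ Icc 1 k, δ' i ^ 2 :=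
    (volume_cremona h1 h2 lamB).symm ▸ hvol
  have hlamB' : 0 < lamB' := by
    have hsq : 0 ≤ ∑ i ∈ Icc 1 k, δ' i ^ 2 := sum_nonneg fun i _ => sq_nonneg _
    exact pos_of_mul_pos_right (by linarith) hF.le
  exact ⟨hF, hlamB', fun i hi => (hδ' i hi).1, fun i hi => (hδ' i hi).2, hvol'⟩

/-- If `v` lies in the standard symplectic cone `C₀` (all entries positive,
`lamF > δᵢ` for all `i`, positive volume) and `defect(v) = δ₁ + δ₂ − lamF > 0`,
then `cremona(v)` also lies in `C₀`. -/
theorem cremona_preserves_cone (k : ℕ) (hk : 2 ≤ k) (lamF lamB : ℝ) (δ : ℕ → ℝ)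
    (hF : 0 < lamF) (hB : 0 < lamB)
    (hδ : ∀ i ∈ Finset.Icc 1 k, 0 < δ i)
    (hFδ : ∀ i ∈ Finset.Icc 1 k, δ i < lamF)
    (hvol : 0 < lamF * lamB - (1/2) * ∑ i ∈ Finset.Icc 1 k, (δ i)^2)
    (hdef : 0 < δ 1 + δ 2 - lamF) :
    let δ' : ℕ → ℝ := fun i => if i = 1 then lamF - δ 2 else if i = 2 then lamF - δ 1 else δ i
    let lamB' : ℝ := lamB - (δ 1 + δ 2 - lamF)
    0 < lamF ∧ 0 < lamB' ∧ (∀ i ∈ Finset.Icc 1 k, 0 < δ' i) ∧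
      (∀ i ∈ Finset.Icc 1 k, δ' i < lamF) ∧
      0 < lamF * lamB' - (1/2) * ∑ i ∈ Finset.Icc 1 k, (δ' i)^2 :=
  cremona_preserves_cone_general k hk lamF lamB δ hF hδ hFδ hvol
end

section
/- Let k ≥ 2. For every vector v in the standard symplectic cone C₀ ⊂ ℝ^{2+k}, iterating the Cremona move starting from v terminates after finitely many steps at a fixed point, i.e., there exists N such that the N-th iterate v^{(N)} satisfies δ_1^{(N)} ≥ … ≥ δ_k^{(N)} and δ_1^{(N)} + δ_2^{(N)} ≤ λ_F. -/
private lemma anti_of_sort {k : ℕ} (f : Fin k → ℝ) :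
    Antitone (f ∘ Tuple.sort (fun i => -f i)) := by
  have h := Tuple.monotone_sort (fun i => -f i)
  intro a b hab
  have := h hab
  simp only [Function.comp_apply] at this ⊢
  linarith

/-- For every vector `v` in the standard symplectic cone `C₀`, iterating the
Cremona move starting from `v` terminates after finitely many steps at a fixed
point: there exists `N` such that the `N`-th iterate has decreasingly sorted
`δ`-entries with `δ₁ + δ₂ ≤ lamF`. -/
theorem cremona_move_terminates (k : ℕ) (hk : 2 ≤ k) (lamF lamB : ℝ)
    (δ : Fin k → ℝ)
    (hcone : 0 < lamF ∧ 0 < lamB ∧ (∀ i, 0 < δ i ∧ δ i < lamF) ∧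
      0 < lamF * lamB - (1/2) * ∑ i, (δ i)^2) :
    let i0 : Fin k := ⟨0, by omega⟩
    let i1 : Fin k := ⟨1, by omega⟩
    let move : (ℝ × (Fin k → ℝ)) → (ℝ × (Fin k → ℝ)) := fun p =>
      let d := p.2
      let defect : ℝ := d i0 + d i1 - lamF
      let d' : Fin k → ℝ := if 0 < defect then
          (fun i => if i = i0 then lamF - d i1 else if i = i1 then lamF - d i0 else d i)
        else d
      let b' : ℝ := if 0 < defect then p.1 - defect else p.1
      (b', d' ∘ Tuple.sort (fun i => - d' i))
    ∃ N : ℕ, Antitone ((move^[N] (lamB, δ)).2) ∧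
      (move^[N] (lamB, δ)).2 i0 + (move^[N] (lamB, δ)).2 i1 ≤ lamF := by
  intro i0 i1 move
  have hi01 : i0 ≠ i1 := by
    simp only [i0, i1, ne_eq, Fin.mk.injEq]
    omega
  -- the finite set of possible entries
  set S : Finset ℝ :=
    (Finset.univ.image δ) ∪ (Finset.univ.image (fun i => lamF - δ i)) with hS
  have hSmem : ∀ i, δ i ∈ S := by
    intro i
    exact Finset.mem_union_left _ (Finset.mem_image_of_mem _ (Finset.mem_univ i))
  have hSclosed : ∀ x ∈ S, lamF - x ∈ S := by
    intro x hx
    rcases Finset.mem_union.1 hx with h | h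
    · obtain ⟨i, _, rfl⟩ := Finset.mem_image.1 h
      exact Finset.mem_union_right _ (Finset.mem_image_of_mem _ (Finset.mem_univ i))
    · obtain ⟨i, _, rfl⟩ := Finset.mem_image.1 h
      have : lamF - (lamF - δ i) = δ i := by ring
      rw [this]
      exact hSmem i
  -- entries of any iterate stay in S
  have hA : ∀ p : ℝ × (Fin k → ℝ), (∀ i, p.2 i ∈ S) → ∀ i, (move p).2 i ∈ S := by
    intro p hp
    have hd' : ∀ (f : Fin k → ℝ), (∀ j, f j ∈ S) →
        ∀ i, (f ∘ (Tuple.sort (fun i => -f i))) i ∈ S := fun f hf i => hf _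
    simp only [move]
    apply hd'
    intro j
    by_cases h : 0 < p.2 i0 + p.2 i1 - lamF
    · rw [if_pos h]
      split_ifs
      · exact hSclosed _ (hp _)
      · exact hSclosed _ (hp _)
      · exact hp _
    · rw [if_neg h]
      exact hp j
  have hAll : ∀ n, ∀ i, ((move^[n] (lamB, δ)).2) i ∈ S := by
    intro n
    induction n with
    | zero => simpa using hSmem
    | succ n ih =>
      rw [Function.iterate_succ_apply']
      exact hA _ ih
  -- sum strictly drops on a nontrivial move
  have hsum : ∀ p : ℝ × (Fin k → ℝ), 0 < p.2 i0 + p.2 i1 - lamF →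
      ∑ i, (move p).2 i < ∑ i, p.2 i := by
    intro p hp
    have hperm : ∀ (f : Fin k → ℝ) (σ : Equiv.Perm (Fin k)),
        ∑ i, (f ∘ σ) i = ∑ i, f i := fun f σ => Equiv.sum_comp σ f
    simp only [move, if_pos hp]
    rw [hperm]
    set d := p.2 with hd
    set d' : Fin k → ℝ :=
      fun i => if i = i0 then lamF - d i1 else if i = i1 then lamF - d i0 else d i with hd'
    have hsub : ({i0, i1} : Finset (Fin k)) ⊆ Finset.univ := Finset.subset_univ _
    have e1 : ∑ i ∈ Finset.univ \ {i0, i1}, d' i + ∑ i ∈ ({i0, i1} : Finset (Fin k)), d' i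
        = ∑ i, d' i := Finset.sum_sdiff hsub
    have e2 : ∑ i ∈ Finset.univ \ {i0, i1}, d i + ∑ i ∈ ({i0, i1} : Finset (Fin k)), d i
        = ∑ i, d i := Finset.sum_sdiff hsub
    have e3 : ∑ i ∈ Finset.univ \ {i0, i1}, d' i = ∑ i ∈ Finset.univ \ {i0, i1}, d i := by
      refine Finset.sum_congr rfl ?_
      intro i hi
      simp only [Finset.mem_sdiff, Finset.mem_insert, Finset.mem_singleton] at hi
      push_neg at hi
      simp only [hd', if_neg hi.2.1, if_neg hi.2.2]
    have e4 : ∑ i ∈ ({i0, i1} : Finset (Fin k)), d' i = d' i0 + d' i1 :=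
      Finset.sum_pair hi01
    have e5 : ∑ i ∈ ({i0, i1} : Finset (Fin k)), d i = d i0 + d i1 :=
      Finset.sum_pair hi01
    have e6 : d' i0 = lamF - d i1 := by simp [hd']
    have e7 : d' i1 = lamF - d i0 := by simp [hd', hi01.symm]
    linarith
  -- after at least one move, entries are sorted decreasingly
  have hanti : ∀ p : ℝ × (Fin k → ℝ), Antitone ((move p).2) := by
    intro p
    simp only [move]
    exact anti_of_sort _
  -- the finite set of possible sums
  set T : Finset ℝ :=
    (Fintype.piFinset (fun _ : Fin k => S)).image (fun f => ∑ i, f i) with hT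
  set F : ℕ → ℝ := fun n => ∑ i, ((move^[n] (lamB, δ)).2) i with hF
  have hFT : ∀ n, F n ∈ T := by
    intro n
    exact Finset.mem_image.2 ⟨_, Fintype.mem_piFinset.2 (hAll n), rfl⟩
  -- find an iterate (≥ 1) with nonpositive defect
  have key : ∃ n, 1 ≤ n ∧
      ¬ (0 < (move^[n] (lamB, δ)).2 i0 + (move^[n] (lamB, δ)).2 i1 - lamF) := by
    by_contra hcon
    push_neg at hcon
    have hsa : StrictAnti (fun n => F (n + 1)) := by
      refine strictAnti_nat_of_succ_lt ?_
      intro n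
      have h := hsum (move^[n + 1] (lamB, δ)) (hcon (n + 1) (by omega))
      rw [← Function.iterate_succ_apply' move (n + 1)] at h
      exact h
    obtain ⟨a, ha, b, hb, hab, heq⟩ :=
      Finset.exists_ne_map_eq_of_card_lt_of_maps_to
        (s := Finset.range (T.card + 1)) (t := T) (by simp)
        (fun n _ => hFT (n + 1))
    exact hab (by simpa using hsa.injective heq)
  obtain ⟨n, hn1, hle⟩ := key
  push_neg at hle
  obtain ⟨m, rfl⟩ : ∃ m, n = m + 1 := ⟨n - 1, by omega⟩
  refine ⟨m + 1, ?_, by linarith⟩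
  rw [Function.iterate_succ_apply']
  exact hanti _
end
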